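/- Let C →* D be an execution of a broadcast protocol over an arbitrary topology Γ of length n starting in the initial configuration and ending with vertex v in state q_f. Let (T,λ) be the unfolding tree of Γ at v to depth n. Then if C' is h-correct for a configuration C₁ over Γ (i.e., every vertex of T at depth ≤ h has the state of its λ-image in C₁) and C₁ → C₂ over Γ, there exists C'₂ over T with C' →* C'₂ such that C'₂ is (h−1)-correct for C₂. Consequently the root of T can reach q_f. -/

import Mathlib

namespace BN

/-- Actions of a broadcast protocol: broadcast `!!m`, reception `?m`, internal `τ`. -/
inductive Act (M : Type) : Type where
  | brd : M → Act M
  | rcv : M → Act M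
  | tau : Act M

/-- A broadcast protocol: an initial state and a set of transitions. -/
structure Protocol (Q M : Type) : Type where
  qin : Q
  delta : Set (Q × Act M × Q)

variable {Q M V : Type}

/-- `q` has an outgoing reception of `m`. -/
def canRecv (P : Protocol Q M) (q : Q) (m : M) : Prop :=
  ∃ q', (q, Act.rcv m, q') ∈ P.delta

/-- One step of the broadcast network semantics over topology `G`,
performed by vertex `v` taking transition `t`. -/
def Step (G : SimpleGraph V) (P : Protocol Q M) (v : V)
    (t : Q × Act M × Q) (L L' : V → Q) : Prop :=
  t ∈ P.delta ∧ L v = t.1 ∧ L' v = t.2.2 ∧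
  (match t.2.1 with
   | Act.tau => ∀ u, u ≠ v → L' u = L u
   | Act.brd m =>
       (∀ u, G.Adj v u →
          ((L u, Act.rcv m, L' u) ∈ P.delta ∨ (¬ canRecv P (L u) m ∧ L' u = L u))) ∧
       (∀ u, u ≠ v → ¬ G.Adj v u → L' u = L u)
   | Act.rcv _ => False)

def StepAny (G : SimpleGraph V) (P : Protocol Q M) (L L' : V → Q) : Prop :=
  ∃ v t, Step G P v t L L'

def Reach (G : SimpleGraph V) (P : Protocol Q M) : (V → Q) → (V → Q) → Prop :=
  Relation.ReflTransGen (StepAny G P)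

def initConf (P : Protocol Q M) : V → Q := fun _ => P.qin

/-- `qf` is coverable over the class of all (finite) graph topologies. -/
def Coverable (P : Protocol Q M) (qf : Q) : Prop :=
  ∃ (V' : Type) (_ : Fintype V') (G : SimpleGraph V') (L : V' → Q),
    Reach G P (initConf P) L ∧ ∃ v, L v = qf

/-- A tree topology: a prefix-closed finite set of words over ℕ containing ε. -/
structure TreeTopo : Type where
  verts : Finset (List ℕ)
  nil_mem : ([] : List ℕ) ∈ verts
  prefixClosed : ∀ w ∈ verts, ∀ w' : List ℕ, w' <+: w → w' ∈ verts

abbrev TreeTopo.Vert (T : TreeTopo) : Type := {w : List ℕ // w ∈ T.verts}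

def TreeTopo.root (T : TreeTopo) : T.Vert := ⟨[], T.nil_mem⟩

/-- The graph of a tree topology: each word `w ++ [x]` is adjacent to its parent `w`. -/
def TreeTopo.graph (T : TreeTopo) : SimpleGraph T.Vert where
  Adj u v := (∃ x : ℕ, (v : List ℕ) = (u : List ℕ) ++ [x]) ∨
             (∃ x : ℕ, (u : List ℕ) = (v : List ℕ) ++ [x])
  symm := by constructor; intro u v h; exact h.symm
  loopless := by
    constructor; intro u h
    rcases h with ⟨x, hx⟩ | ⟨x, hx⟩ <;> simpa using congrArg List.length hx

def CoverableWith (T : TreeTopo) (P : Protocol Q M) (qf : Q) : Prop :=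
  ∃ L : T.Vert → Q, Reach T.graph P (initConf P) L ∧ ∃ u, L u = qf

def CoverableTreeRoot (P : Protocol Q M) (qf : Q) : Prop :=
  ∃ (T : TreeTopo) (L : T.Vert → Q),
    Reach T.graph P (initConf P) L ∧ L T.root = qf

/-- `(T, lam)` is the unfolding of graph `G` at vertex `v` to depth `n`. -/
structure IsUnfolding {V : Type} (G : SimpleGraph V) (v : V) (n : ℕ)
    (T : TreeTopo) (lam : T.Vert → V) : Prop where
  root_lbl : lam T.root = v
  depth_le : ∀ w ∈ T.verts, w.length ≤ n
  root_children :
    Set.BijOn lam {u : T.Vert | ∃ x : ℕ, (u : List ℕ) = [x]} (G.neighborSet v)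
  children : ∀ (u : T.Vert) (w : List ℕ) (hw : w ∈ T.verts) (x : ℕ),
      (u : List ℕ) = w ++ [x] → (u : List ℕ).length < n →
      Set.BijOn lam {u' : T.Vert | ∃ y : ℕ, (u' : List ℕ) = (u : List ℕ) ++ [y]}
        (G.neighborSet (lam u) \ {lam ⟨w, hw⟩})
  no_deep : ∀ u : T.Vert, n ≤ (u : List ℕ).length →
      ∀ x : ℕ, (u : List ℕ) ++ [x] ∉ T.verts

/-- Phase tags annotating states: `zero` (phase 0), broadcast phase `j`, reception phase `j`. -/
inductive PTag : Type where
  | zero : PTag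
  | bph : ℕ → PTag
  | rph : ℕ → PTag
deriving DecidableEq

def bOf : ℕ → PTag
  | 0 => .zero
  | j+1 => .bph (j+1)

def rOf : ℕ → PTag
  | 0 => .zero
  | j+1 => .rph (j+1)

/-- `φ` witnesses that `P` is `k`-phase-bounded. -/
def IsPhaseAssignment (k : ℕ) (P : Protocol Q M) (φ : Q → PTag) : Prop :=
  φ P.qin = .zero ∧
  (∀ q : Q, φ q = .zero ∨ ∃ j, 1 ≤ j ∧ j ≤ k ∧ (φ q = .bph j ∨ φ q = .rph j)) ∧
  ∀ t ∈ P.delta,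
    (match t.2.1 with
     | Act.tau => φ t.1 = φ t.2.2
     | Act.brd _ =>
         (∃ j, 1 ≤ j ∧ j ≤ k ∧ φ t.1 = .bph j ∧ φ t.2.2 = .bph j) ∨
         (∃ i, i < k ∧ φ t.1 = rOf i ∧ φ t.2.2 = .bph (i+1))
     | Act.rcv _ =>
         (∃ j, 1 ≤ j ∧ j ≤ k ∧ φ t.1 = .rph j ∧ φ t.2.2 = .rph j) ∨
         (∃ i, i < k ∧ φ t.1 = bOf i ∧ φ t.2.2 = .rph (i+1)) ∨
         (1 ≤ k ∧ φ t.1 = .bph k ∧ φ t.2.2 = .rph k))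

def IsPhaseBounded (k : ℕ) (P : Protocol Q M) : Prop :=
  ∃ φ : Q → PTag, IsPhaseAssignment k P φ

/-- The `k`-unfolding `Pₖ` of a protocol `P`. -/
def unfoldP (P : Protocol Q M) (k : ℕ) : Protocol (Q × PTag) M where
  qin := (P.qin, .zero)
  delta :=
    {t | ∃ q p, (q, Act.tau, p) ∈ P.delta ∧ t = ((q, .zero), Act.tau, (p, .zero))} ∪
    {t | ∃ q p α j, 1 ≤ j ∧ j ≤ k ∧ (q, α, p) ∈ P.delta ∧
        (α = Act.tau ∨ ∃ m, α = Act.rcv m) ∧ t = ((q, .rph j), α, (p, .rph j))} ∪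
    {t | ∃ q p α j, 1 ≤ j ∧ j ≤ k ∧ (q, α, p) ∈ P.delta ∧
        (α = Act.tau ∨ ∃ m, α = Act.brd m) ∧ t = ((q, .bph j), α, (p, .bph j))} ∪
    {t | ∃ q p m j, j < k ∧ (q, Act.brd m, p) ∈ P.delta ∧
        t = ((q, rOf j), Act.brd m, (p, .bph (j+1)))} ∪
    {t | ∃ q p m j, j < k ∧ (q, Act.rcv m, p) ∈ P.delta ∧
        t = ((q, bOf j), Act.rcv m, (p, .rph (j+1)))} ∪
    {t | ∃ q p m, 1 ≤ k ∧ (q, Act.rcv m, p) ∈ P.delta ∧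
        t = ((q, .bph k), Act.rcv m, (p, .rph k))}

/-- Star topology: root `none` adjacent to every leaf `some i`, no other edges. -/
def starGraph (ι : Type) : SimpleGraph (Option ι) where
  Adj u v := (u = none ∧ v ≠ none) ∨ (v = none ∧ u ≠ none)
  symm := by constructor; intro u v h; tauto
  loopless := by constructor; intro u h; tauto

/-- For a 1-phase-bounded protocol with witness `φ`, `Q^b = Q₀ ∪ Q₁^b`. -/
def Qb (φ : Q → PTag) : Set Q := {q | φ q = .zero ∨ φ q = .bph 1}

/-- The set component of the broadcast-print of a star configuration. -/
def bprintSet {ι : Type} (φ : Q → PTag) (L : Option ι → Q) : Set Q :=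
  {q | q ∈ Qb φ ∧ ∃ i, L (some i) = q}

/-- The abstract transition relation `⇒` on broadcast-prints. -/
def PrintStep (P : Protocol Q M) (φ : Q → PTag) :
    (Q × Set Q) → (Q × Set Q) → Prop := fun pr pr' =>
  ∃ (ι : Type) (_ : Fintype ι) (L L' : Option ι → Q),
    StepAny (starGraph ι) P L L' ∧ L none ∈ Qb φ ∧ L' none ∈ Qb φ ∧
    pr = (L none, bprintSet φ L) ∧ pr' = (L' none, bprintSet φ L')

/-- Line topology on `Fin ℓ`: consecutive vertices are adjacent. -/
def lineGraph (ℓ : ℕ) : SimpleGraph (Fin ℓ) where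
  Adj i j := (i : ℕ) + 1 = (j : ℕ) ∨ (j : ℕ) + 1 = (i : ℕ)
  symm := by constructor; intro i j h; tauto
  loopless := by constructor; intro i h; rcases h with h | h <;> omega

/-- `t` is a broadcast transition. -/
def IsBrdT (t : Q × Act M × Q) : Prop := ∃ m, t.2.1 = Act.brd m

/-- In the execution described by `vs, ts` of length `n`, `i` is the first index at
which vertex `u` performs a broadcast. -/
def IsFirstBrd {V' : Type} (vs : ℕ → V') (ts : ℕ → Q × Act M × Q) (n : ℕ)
    (u : V') (i : ℕ) : Prop :=
  i < n ∧ vs i = u ∧ IsBrdT (ts i) ∧ ∀ j < i, vs j = u → ¬ IsBrdT (ts j)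

/-- Every transition of `u` occurs no later than every broadcast of `w`
(i.e. lastBroadcast(u) ≤ firstBroadcast(w)). -/
def BrdOrder {V' : Type} (n : ℕ) (vs : ℕ → V') (ts : ℕ → Q × Act M × Q)
    (u w : V') : Prop :=
  ∀ j j', j < n → j' < n → vs j = u → vs j' = w → IsBrdT (ts j') → j ≤ j'

/-- One application of the pair-coverability operator. -/
def pairStep (P : Protocol Q M) (S : Set (Q × Q)) : Set (Q × Q) :=
  S ∪
  {p | ∃ p₁, (p₁, p.2) ∈ S ∧ (p₁, Act.tau, p.1) ∈ P.delta} ∪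
  {p | ∃ p₂, (p.1, p₂) ∈ S ∧ (p₂, Act.tau, p.2) ∈ P.delta} ∪
  {p | ∃ p₁ p₂ m, (p₁, p₂) ∈ S ∧ (p₂, Act.brd m, p.2) ∈ P.delta ∧
      (p₁, Act.rcv m, p.1) ∈ P.delta} ∪
  {p | ∃ p₂ m, (p.1, p₂) ∈ S ∧ (p₂, Act.brd m, p.2) ∈ P.delta ∧ ¬ canRecv P p.1 m} ∪
  {p | p.1 = P.qin ∧ ∃ q', (p.2, q') ∈ S}

/-- The iteration `S₀ ⊆ S₁ ⊆ …` of the pair-coverability operator. -/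
def Siter (P : Protocol Q M) : ℕ → Set (Q × Q)
  | 0 => {(P.qin, P.qin)}
  | i+1 => pairStep P (Siter P i)

/-! A step of a vertex `w` of `Γ` is simulated on `T` by letting all copies of `w` (vertices
labelled `w`) at depth at most `h` fire one after the other. Since `λ` is a bijection from the
neighbours of a tree vertex onto the neighbours of its label, these copies are pairwise
non-adjacent and no tree vertex is adjacent to two of them, so every tree vertex near a copy
sees exactly what its label sees in `Γ`. The only loss is at depth `h`: the copy of `w` such a
vertex should hear may lie at depth `h + 1`. Starting from the initial configuration, which is
`n`-correct, the `n` steps of the execution give a configuration that is `0`-correct for the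
last one, so the root is in state `q_f`. -/

open Classical in
noncomputable def receiveOrStay (P : Protocol Q M) (m : M) (q : Q) : Q :=
  if h : canRecv P q m then h.choose else q

theorem receiveOrStay_spec (P : Protocol Q M) (m : M) (q : Q) :
    (q, Act.rcv m, receiveOrStay P m q) ∈ P.delta ∨
      (¬ canRecv P q m ∧ receiveOrStay P m q = q) := by
  unfold receiveOrStay
  split_ifs with h
  · exact Or.inl h.choose_spec
  · exact Or.inr ⟨h, rfl⟩

open Classical in
noncomputable def fire (G : SimpleGraph V) (B : Finset V) (q₂ : Q) (r C : V → Q) : V → Q :=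
  fun u => if u ∈ B then q₂ else if ∃ b ∈ B, G.Adj b u then r u else C u

theorem fire_empty (G : SimpleGraph V) (q₂ : Q) (r C : V → Q) : fire G ∅ q₂ r C = C := by
  funext u
  simp [fire]

section Firing

variable {G : SimpleGraph V} {P : Protocol Q M}

theorem reach_fire_tau {B : Finset V} {q₁ q₂ : Q} (ht : (q₁, Act.tau, q₂) ∈ P.delta)
    {C : V → Q} (hB : ∀ b ∈ B, C b = q₁) : Reach G P C (fire G B q₂ C C) := by
  classical
  refine Finset.induction_on' B ?_ fun b B' hb _ hbB' ih => ?_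
  · rw [fire_empty]
    exact Relation.ReflTransGen.refl
  refine Relation.ReflTransGen.tail ih ⟨b, (q₁, Act.tau, q₂), ht, ?_, ?_, fun u hub => ?_⟩
  · simp [fire, hbB', hB b hb]
  · simp [fire]
  · simp [fire, hub]

theorem reach_fire_brd {B : Finset V} {q₁ q₂ : Q} {m : M} (ht : (q₁, Act.brd m, q₂) ∈ P.delta)
    {C r : V → Q} (hB : ∀ b ∈ B, C b = q₁) (hindep : G.IsIndepSet B)
    (hdisj : ∀ a ∈ B, ∀ b ∈ B, ∀ u, G.Adj a u → G.Adj b u → a = b)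
    (hr : ∀ b ∈ B, ∀ u, G.Adj b u →
      (C u, Act.rcv m, r u) ∈ P.delta ∨ (¬ canRecv P (C u) m ∧ r u = C u)) :
    Reach G P C (fire G B q₂ r C) := by
  classical
  refine Finset.induction_on' B ?_ fun b B' hb hB' hbB' ih => ?_
  · rw [fire_empty]
    exact Relation.ReflTransGen.refl
  have hnadj : ∀ a ∈ B', ∀ u, G.Adj a u → ¬ G.Adj b u := fun a ha u hau hbu =>
    hbB' (hdisj b hb a (hB' ha) u hbu hau ▸ ha)
  have hout : ∀ a ∈ B, ∀ u, G.Adj a u → u ∉ B := fun a ha u hau hu =>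
    hindep ha hu (G.ne_of_adj hau) hau
  refine Relation.ReflTransGen.tail ih ⟨b, (q₁, Act.brd m, q₂), ht, ?_, ?_, fun u hbu => ?_,
    fun u hub hbu => ?_⟩
  · have hb' : ¬ ∃ a ∈ B', G.Adj a b := fun ⟨a, ha, hab⟩ => hout a (hB' ha) b hab hb
    simp [fire, hbB', hb', hB b hb]
  · simp [fire]
  · have huB : u ∉ B := hout b hb u hbu
    have hpre : fire G B' q₂ r C u = C u := by
      dsimp only [fire]
      rw [if_neg fun h => huB (hB' h), if_neg fun ⟨a, ha, hau⟩ => hnadj a ha u hau hbu]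
    have hpost : fire G (insert b B') q₂ r C u = r u := by
      dsimp only [fire]
      rw [if_neg, if_pos ⟨b, Finset.mem_insert_self b B', hbu⟩]
      rw [Finset.mem_insert, not_or]
      exact ⟨(G.ne_of_adj hbu).symm, fun h => huB (hB' h)⟩
    rw [hpre, hpost]
    exact hr b hb u hbu
  · simp [fire, hub, hbu]

end Firing

theorem TreeTopo.length_le_of_adj {T : TreeTopo} {a x : T.Vert} (h : T.graph.Adj a x) :
    (a : List ℕ).length ≤ (x : List ℕ).length + 1 := by
  rcases h with ⟨c, hc⟩ | ⟨c, hc⟩ <;>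
    simp only [hc, List.length_append, List.length_singleton] <;> omega

section Unfolding

variable {G : SimpleGraph V} {v : V} {n : ℕ} {T : TreeTopo} {lam : T.Vert → V}

theorem IsUnfolding.length_lt_of_child (hunf : IsUnfolding G v n T lam) {x y : T.Vert} {a : ℕ}
    (hy : (y : List ℕ) = (x : List ℕ) ++ [a]) : (x : List ℕ).length < n := by
  by_contra hle
  exact hunf.no_deep x (not_lt.mp hle) a (hy ▸ y.2)

/-- `root_children` and `children` in one statement: the root has no parent. -/
theorem IsUnfolding.bijOn_children (hunf : IsUnfolding G v n T lam) {x : T.Vert}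
    (hx : (x : List ℕ).length < n) :
    Set.BijOn lam {y | ∃ a, (y : List ℕ) = (x : List ℕ) ++ [a]}
      (G.neighborSet (lam x) \ lam '' {p | ∃ a, (x : List ℕ) = (p : List ℕ) ++ [a]}) := by
  rcases List.eq_nil_or_concat (x : List ℕ) with hroot | ⟨w, z, hxw⟩
  · obtain rfl : x = T.root := Subtype.ext hroot
    rw [hunf.root_lbl]
    simpa [TreeTopo.root] using hunf.root_children
  · rw [List.concat_eq_append] at hxw
    have hw : w ∈ T.verts := T.prefixClosed _ x.2 w ⟨[z], hxw.symm⟩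
    have hparent : {p : T.Vert | ∃ a, (x : List ℕ) = (p : List ℕ) ++ [a]} = {⟨w, hw⟩} := by
      ext p
      simp [hxw, List.append_singleton_inj, Subtype.ext_iff, eq_comm]
    rw [hparent, Set.image_singleton]
    exact hunf.children x w hw z hxw hx

theorem IsUnfolding.adj_of_child (hunf : IsUnfolding G v n T lam) {x y : T.Vert} {a : ℕ}
    (hy : (y : List ℕ) = (x : List ℕ) ++ [a]) : G.Adj (lam x) (lam y) :=
  ((hunf.bijOn_children (hunf.length_lt_of_child hy)).mapsTo ⟨a, hy⟩).1

theorem IsUnfolding.adj_map (hunf : IsUnfolding G v n T lam) {x y : T.Vert}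
    (h : T.graph.Adj x y) : G.Adj (lam x) (lam y) := by
  rcases h with ⟨a, ha⟩ | ⟨a, ha⟩
  · exact hunf.adj_of_child ha
  · exact (hunf.adj_of_child ha).symm

theorem IsUnfolding.not_adj_of_map_eq (hunf : IsUnfolding G v n T lam) {a b : T.Vert}
    (hab : lam a = lam b) : ¬ T.graph.Adj a b := fun h =>
  G.loopless.irrefl _ (hab ▸ hunf.adj_map h)

theorem IsUnfolding.eq_of_adj_of_adj (hunf : IsUnfolding G v n T lam) {a b x : T.Vert}
    (ha : T.graph.Adj a x) (hb : T.graph.Adj b x) (hab : lam a = lam b) : a = b := by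
  rcases ha with ⟨c, hc⟩ | ⟨c, hc⟩ <;> rcases hb with ⟨d, hd⟩ | ⟨d, hd⟩
  · exact Subtype.ext (List.append_singleton_inj.mp (hc.symm.trans hd)).1
  · exact absurd ⟨a, ⟨c, hc⟩, hab⟩ ((hunf.bijOn_children (hunf.length_lt_of_child hd)).mapsTo
      ⟨d, hd⟩).2
  · exact absurd ⟨b, ⟨d, hd⟩, hab.symm⟩ ((hunf.bijOn_children (hunf.length_lt_of_child hc)).mapsTo
      ⟨c, hc⟩).2
  · exact (hunf.bijOn_children (hunf.length_lt_of_child hc)).injOn ⟨c, hc⟩ ⟨d, hd⟩ hab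

theorem IsUnfolding.exists_adj_map_eq (hunf : IsUnfolding G v n T lam) {x : T.Vert}
    (hx : (x : List ℕ).length < n) {w : V} (h : G.Adj (lam x) w) :
    ∃ b, T.graph.Adj b x ∧ lam b = w := by
  by_cases hp : w ∈ lam '' {p | ∃ a, (x : List ℕ) = (p : List ℕ) ++ [a]}
  · obtain ⟨b, ⟨a, ha⟩, rfl⟩ := hp
    exact ⟨b, Or.inl ⟨a, ha⟩, rfl⟩
  · obtain ⟨b, ⟨a, ha⟩, rfl⟩ := (hunf.bijOn_children hx).surjOn ⟨h, hp⟩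
    exact ⟨b, Or.inr ⟨a, ha⟩, rfl⟩

end Unfolding

def IsHCorrect {T : TreeTopo} (lam : T.Vert → V) (h : ℕ) (C' : T.Vert → Q) (C : V → Q) : Prop :=
  ∀ u : T.Vert, (u : List ℕ).length ≤ h → C' u = C (lam u)

theorem IsHCorrect.mono {T : TreeTopo} {lam : T.Vert → V} {h h' : ℕ} {C' : T.Vert → Q}
    {C : V → Q} (hc : IsHCorrect lam h C' C) (hh' : h' ≤ h) : IsHCorrect lam h' C' C :=
  fun u hu => hc u (hu.trans hh')

open Classical in
noncomputable def copiesUpTo {T : TreeTopo} (lam : T.Vert → V) (w : V) (h : ℕ) :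
    Finset T.Vert :=
  {u | lam u = w ∧ (u : List ℕ).length ≤ h}

section Simulation

variable {G : SimpleGraph V} {P : Protocol Q M} {v : V} {n : ℕ} {T : TreeTopo}
  {lam : T.Vert → V} {w : V} {h : ℕ}

theorem mem_copiesUpTo {u : T.Vert} :
    u ∈ copiesUpTo lam w h ↔ lam u = w ∧ (u : List ℕ).length ≤ h := by
  simp [copiesUpTo]

theorem IsHCorrect.apply_of_mem_copiesUpTo {C' : T.Vert → Q} {C : V → Q}
    (hc : IsHCorrect lam h C' C) {b : T.Vert} (hb : b ∈ copiesUpTo lam w h) : C' b = C w := by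
  obtain ⟨hbw, hbh⟩ := mem_copiesUpTo.1 hb
  rw [hc b hbh, hbw]

theorem IsUnfolding.exists_copy_adj (hunf : IsUnfolding G v n T lam) (hn : h ≤ n) {u : T.Vert}
    (hu : (u : List ℕ).length < h) (hadj : G.Adj w (lam u)) :
    ∃ b ∈ copiesUpTo lam w h, T.graph.Adj b u := by
  obtain ⟨b, hbu, hbw⟩ := hunf.exists_adj_map_eq (hu.trans_le hn) hadj.symm
  have := TreeTopo.length_le_of_adj hbu
  exact ⟨b, mem_copiesUpTo.2 ⟨hbw, by omega⟩, hbu⟩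

theorem IsHCorrect.exists_reach_of_step_tau {q₁ q₂ : Q} {C₁ C₂ : V → Q} {C' : T.Vert → Q}
    (hs : Step G P w (q₁, Act.tau, q₂) C₁ C₂) (hc : IsHCorrect lam h C' C₁) :
    ∃ C'₂, Reach T.graph P C' C'₂ ∧ IsHCorrect lam h C'₂ C₂ := by
  classical
  obtain ⟨ht, hq₁, hq₂, hα⟩ := hs
  refine ⟨fire T.graph (copiesUpTo lam w h) q₂ C' C',
    reach_fire_tau ht fun b hb => (hc.apply_of_mem_copiesUpTo hb).trans hq₁, fun u hu => ?_⟩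
  by_cases huB : u ∈ copiesUpTo lam w h
  · simpa [fire, huB, (mem_copiesUpTo.1 huB).1] using hq₂.symm
  · have huw : lam u ≠ w := fun huw => huB (mem_copiesUpTo.2 ⟨huw, hu⟩)
    simpa [fire, huB, hc u hu] using (hα (lam u) huw).symm

theorem IsUnfolding.exists_reach_isHCorrect_of_step_brd (hunf : IsUnfolding G v n T lam)
    (hh : 0 < h) (hn : h ≤ n) {q₁ q₂ : Q} {m : M} {C₁ C₂ : V → Q} {C' : T.Vert → Q}
    (hs : Step G P w (q₁, Act.brd m, q₂) C₁ C₂) (hc : IsHCorrect lam h C' C₁) :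
    ∃ C'₂, Reach T.graph P C' C'₂ ∧ IsHCorrect lam (h - 1) C'₂ C₂ := by
  classical
  obtain ⟨ht, hq₁, hq₂, hrecv, hfar⟩ := hs
  set B := copiesUpTo lam w h
  have hlam : ∀ a ∈ B, ∀ b ∈ B, lam a = lam b := fun a ha b hb =>
    (mem_copiesUpTo.1 ha).1.trans (mem_copiesUpTo.1 hb).1.symm
  let r : T.Vert → Q := fun u =>
    if (u : List ℕ).length ≤ h then C₂ (lam u) else receiveOrStay P m (C' u)
  have hr : ∀ b ∈ B, ∀ u, T.graph.Adj b u →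
      (C' u, Act.rcv m, r u) ∈ P.delta ∨ (¬ canRecv P (C' u) m ∧ r u = C' u) := by
    intro b hb u hbu
    by_cases hu : (u : List ℕ).length ≤ h
    · simp only [r, if_pos hu, hc u hu]
      exact hrecv (lam u) ((mem_copiesUpTo.1 hb).1 ▸ hunf.adj_map hbu)
    · simpa only [r, if_neg hu] using receiveOrStay_spec P m (C' u)
  refine ⟨fire T.graph B q₂ r C',
    reach_fire_brd ht (fun b hb => (hc.apply_of_mem_copiesUpTo hb).trans hq₁)
      (fun a ha b hb _ => hunf.not_adj_of_map_eq (hlam a ha b hb))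
      (fun a ha b hb _ hau hbu => hunf.eq_of_adj_of_adj hau hbu (hlam a ha b hb)) hr,
    fun u hu => ?_⟩
  by_cases huB : u ∈ B
  · simpa [fire, huB, (mem_copiesUpTo.1 huB).1] using hq₂.symm
  by_cases hnear : ∃ b ∈ B, T.graph.Adj b u
  · simp [fire, huB, hnear, r, show (u : List ℕ).length ≤ h by omega]
  · have huw : lam u ≠ w := fun huw => huB (mem_copiesUpTo.2 ⟨huw, by omega⟩)
    have hnadj : ¬ G.Adj w (lam u) := fun hadj =>
      hnear (hunf.exists_copy_adj hn (by omega) hadj)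
    simpa [fire, huB, hnear, hc u (by omega)] using (hfar (lam u) huw hnadj).symm

theorem IsUnfolding.exists_reach_isHCorrect_of_step (hunf : IsUnfolding G v n T lam)
    (hh : 0 < h) (hn : h ≤ n) {C₁ C₂ : V → Q} {C' : T.Vert → Q} (hs : StepAny G P C₁ C₂)
    (hc : IsHCorrect lam h C' C₁) :
    ∃ C'₂, Reach T.graph P C' C'₂ ∧ IsHCorrect lam (h - 1) C'₂ C₂ := by
  obtain ⟨w, ⟨q₁, α, q₂⟩, hs⟩ := hs
  cases α with
  | rcv m => exact hs.2.2.2.elim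
  | tau =>
    obtain ⟨C'₂, hreach, hc₂⟩ := hc.exists_reach_of_step_tau hs
    exact ⟨C'₂, hreach, hc₂.mono (Nat.sub_le h 1)⟩
  | brd m => exact hunf.exists_reach_isHCorrect_of_step_brd hh hn hs hc

end Simulation

theorem unfolding_h_correct_general {Q M V : Type} (G : SimpleGraph V)
    (P : Protocol Q M) (qf : Q) (v : V) (n : ℕ) (Ls : ℕ → V → Q)
    (h0 : Ls 0 = initConf P)
    (hstep : ∀ i < n, StepAny G P (Ls i) (Ls (i+1)))
    (hf : Ls n v = qf)
    (T : TreeTopo) (lam : T.Vert → V) (hunf : IsUnfolding G v n T lam) :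
    (∀ (h : ℕ) (C₁ C₂ : V → Q) (C' : T.Vert → Q),
      0 < h → h ≤ n → StepAny G P C₁ C₂ →
      (∀ u : T.Vert, (u : List ℕ).length ≤ h → C' u = C₁ (lam u)) →
      ∃ C'₂ : T.Vert → Q, Reach T.graph P C' C'₂ ∧
        ∀ u : T.Vert, (u : List ℕ).length ≤ h - 1 → C'₂ u = C₂ (lam u)) ∧
    (∃ L' : T.Vert → Q, Reach T.graph P (initConf P) L' ∧ L' T.root = qf) := by
  refine ⟨fun h C₁ C₂ C' hh hn hs hc => hunf.exists_reach_isHCorrect_of_step hh hn hs hc, ?_⟩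
  have hrun : ∀ i ≤ n, ∃ C', Reach T.graph P (initConf P) C' ∧
      IsHCorrect lam (n - i) C' (Ls i) := by
    intro i hi
    induction i with
    | zero => exact ⟨initConf P, Relation.ReflTransGen.refl, fun u _ => by rw [h0]; rfl⟩
    | succ i ih =>
      obtain ⟨C', hreach, hc⟩ := ih (by omega)
      obtain ⟨C'₂, hreach₂, hc₂⟩ :=
        hunf.exists_reach_isHCorrect_of_step (by omega) (by omega) (hstep i (by omega)) hc
      exact ⟨C'₂, hreach.trans hreach₂, fun u hu => hc₂ u (by omega)⟩
  obtain ⟨C', hreach, hc⟩ := hrun n le_rfl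
  exact ⟨C', hreach, by rw [hc T.root (by simp [TreeTopo.root]), hunf.root_lbl, hf]⟩

/-- h-correct simulation on the unfolding tree, and covering at the root. -/
theorem unfolding_h_correct {Q M V : Type} [Fintype V] (G : SimpleGraph V)
    (P : Protocol Q M) (qf : Q) (v : V) (n : ℕ) (Ls : ℕ → V → Q)
    (h0 : Ls 0 = initConf P)
    (hstep : ∀ i < n, StepAny G P (Ls i) (Ls (i+1)))
    (hf : Ls n v = qf)
    (T : TreeTopo) (lam : T.Vert → V) (hunf : IsUnfolding G v n T lam) :
    (∀ (h : ℕ) (C₁ C₂ : V → Q) (C' : T.Vert → Q),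
      0 < h → h ≤ n → StepAny G P C₁ C₂ →
      (∀ u : T.Vert, (u : List ℕ).length ≤ h → C' u = C₁ (lam u)) →
      ∃ C'₂ : T.Vert → Q, Reach T.graph P C' C'₂ ∧
        ∀ u : T.Vert, (u : List ℕ).length ≤ h - 1 → C'₂ u = C₂ (lam u)) ∧
    (∃ L' : T.Vert → Q, Reach T.graph P (initConf P) L' ∧ L' T.root = qf) :=
  unfolding_h_correct_general G P qf v n Ls h0 hstep hf T lam hunf

end BN
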